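/- Let G be a graph with Laplacian L, a, b twin vertices, M = (e_a - e_b)(e_a - e_b)^T, α ∈ ℝ, and q an index distinct from a and b. Suppose e_a - e_q is periodic at time τ in G, i.e., exp(-iτL)(e_a - e_q) = γ(e_a - e_q) with |γ| = 1, and suppose 2ατ ∈ π(2ℤ+1) (an odd multiple of π). Then the perturbed graph with Laplacian L + αM has Pair-LPST at time τ from e_a - e_q to e_b - e_q: exp(-iτ(L + αM))(e_b - e_q) = γ'(e_a - e_q) for some unimodular γ'. -/

import Mathlib

/-!
For twins `a`, `b` the vector `w = e_a - e_b` is an eigenvector of the symmetric Laplacian `L`,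
so `L` commutes with `M = w wᵀ` and `exp (-iτ(L + αM)) = exp (-iτL) · exp (-iταM)`. On the
orthogonal complement of `w` the factor `exp (-iταM)` is the identity, and on `w` it is
multiplication by `exp (-2iατ) = -1`; hence it is the reflection swapping `e_a` and `e_b`, which
sends `e_b - e_q` to `e_a - e_q`. The periodicity of `e_a - e_q` under `L` then gives `γ' = γ`.
-/

open Matrix Complex

namespace Matrix

variable {ι R : Type*} [Fintype ι]

theorem commute_vecMulVec_self [CommRing R] {A : Matrix ι ι R} {w : ι → R} {μ : R}
    (hA : A.IsSymm) (h : A *ᵥ w = μ • w) : Commute A (vecMulVec w w) := by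
  have hwA : w ᵥ* A = μ • w := by rw [← mulVec_transpose, hA.eq, h]
  rw [Commute, SemiconjBy, mul_vecMulVec, vecMulVec_mul, h, hwA, smul_vecMulVec, vecMulVec_smul]

variable [DecidableEq ι]

theorem pow_mulVec_of_mulVec_eq_smul [CommRing R] {A : Matrix ι ι R} {u : ι → R} {μ : R}
    (h : A *ᵥ u = μ • u) (m : ℕ) : (A ^ m) *ᵥ u = μ ^ m • u := by
  induction m with
  | zero => simp
  | succ m ih => rw [pow_succ, ← mulVec_mulVec, h, mulVec_smul, ih, smul_smul, ← pow_succ']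

theorem exp_mulVec_of_mulVec_eq_smul {A : Matrix ι ι ℂ} {u : ι → ℂ} {μ : ℂ}
    (h : A *ᵥ u = μ • u) : NormedSpace.exp A *ᵥ u = Complex.exp μ • u := by
  -- matrices carry no canonical norm; any algebra norm serves to sum the exponential series
  open scoped Norms.Operator in
  let applyTo : Matrix ι ι ℂ →+ (ι → ℂ) :=
    AddMonoidHom.mk' (· *ᵥ u) fun B C => add_mulVec B C u
  have hA := (NormedSpace.exp_series_hasSum_exp' (𝕂 := ℂ) A).map applyTo
    (continuous_id.matrix_mulVec continuous_const)
  have hμ := (NormedSpace.exp_series_hasSum_exp' (𝕂 := ℂ) μ).smul_const u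
  simp only [Function.comp_def, applyTo, AddMonoidHom.mk'_apply, smul_mulVec,
    pow_mulVec_of_mulVec_eq_smul h, smul_smul] at hA
  rw [Complex.exp_eq_exp_ℂ]
  exact hA.unique hμ

theorem exp_smul_vecMulVec_self_mulVec {w : ι → ℂ} (s : ℂ) (hw : w ⬝ᵥ w ≠ 0) (x : ι → ℂ) :
    NormedSpace.exp (s • vecMulVec w w) *ᵥ x
      = x + ((Complex.exp (s * (w ⬝ᵥ w)) - 1) / (w ⬝ᵥ w) * (w ⬝ᵥ x)) • w := by
  set t := (w ⬝ᵥ x) / (w ⬝ᵥ w)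
  have hM : ∀ y, (s • vecMulVec w w) *ᵥ y = (s * (w ⬝ᵥ y)) • w := fun y => by
    rw [smul_mulVec, vecMulVec_mulVec, op_smul_eq_smul, smul_smul]
  have hperp : (s • vecMulVec w w) *ᵥ (x - t • w) = (0 : ℂ) • (x - t • w) := by
    rw [hM, dotProduct_sub, dotProduct_smul, smul_eq_mul, div_mul_cancel₀ _ hw]
    simp
  have hpar : (s • vecMulVec w w) *ᵥ w = (s * (w ⬝ᵥ w)) • w := hM w
  calc NormedSpace.exp (s • vecMulVec w w) *ᵥ x
      = NormedSpace.exp (s • vecMulVec w w) *ᵥ (x - t • w)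
        + t • NormedSpace.exp (s • vecMulVec w w) *ᵥ w := by
        rw [← mulVec_smul, ← mulVec_add, sub_add_cancel]
    _ = x + ((Complex.exp (s * (w ⬝ᵥ w)) - 1) / (w ⬝ᵥ w) * (w ⬝ᵥ x)) • w := by
        rw [exp_mulVec_of_mulVec_eq_smul hperp, exp_mulVec_of_mulVec_eq_smul hpar,
          Complex.exp_zero, one_smul, smul_smul]
        simp only [t]
        module

theorem exp_smul_vecMulVec_mulVec_single_sub_single {a b q : ι} (hab : a ≠ b) (hqa : q ≠ a)
    (hqb : q ≠ b) {s : ℂ} (hs : Complex.exp (s * 2) = -1) :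
    NormedSpace.exp (s • vecMulVec ((Pi.single a 1 : ι → ℂ) - Pi.single b 1)
        ((Pi.single a 1 : ι → ℂ) - Pi.single b 1)) *ᵥ
        ((Pi.single b 1 : ι → ℂ) - Pi.single q 1)
      = (Pi.single a 1 : ι → ℂ) - Pi.single q 1 := by
  set w : ι → ℂ := Pi.single a 1 - Pi.single b 1
  have hww : w ⬝ᵥ w = 2 := by norm_num [w, hab, hab.symm]
  have hwv : w ⬝ᵥ (Pi.single b 1 - Pi.single q 1) = -1 := by simp [w, hab, hqa.symm, hqb.symm]
  rw [exp_smul_vecMulVec_self_mulVec s (hww ▸ two_ne_zero), hww, hs, hwv]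
  simp only [w]
  module

end Matrix

theorem Complex.exp_mul_I_eq_neg_one_of_eq_odd_mul_pi {θ : ℝ} {k : ℤ}
    (h : θ = (2 * k + 1) * Real.pi) : Complex.exp (θ * I) = -1 := by
  rw [h, show (((2 * k + 1) * Real.pi : ℝ) : ℂ) * I = Real.pi * I + k * (2 * Real.pi * I) by
    push_cast; ring, Complex.exp_add, exp_pi_mul_I, exp_int_mul_two_pi_mul_I, mul_one]

namespace SimpleGraph

variable {V R : Type*} [Fintype V] [DecidableEq V] (G : SimpleGraph V) [DecidableRel G.Adj]
  {a b : V}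

theorem degree_eq_of_twins (htwin : ∀ v, v ≠ a → v ≠ b → (G.Adj a v ↔ G.Adj b v)) :
    G.degree a = G.degree b := by
  refine Finset.card_equiv (Equiv.swap a b) fun v => ?_
  simp only [mem_neighborFinset]
  rcases eq_or_ne v a with rfl | hva
  · simp
  rcases eq_or_ne v b with rfl | hvb
  · simp [G.adj_comm]
  · rw [Equiv.swap_apply_of_ne_of_ne hva hvb, htwin v hva hvb]

theorem adjMatrix_mulVec_single_sub_single_of_twins [Ring R]
    (htwin : ∀ v, v ≠ a → v ≠ b → (G.Adj a v ↔ G.Adj b v)) :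
    G.adjMatrix R *ᵥ (Pi.single a 1 - Pi.single b 1)
      = -(if G.Adj a b then 1 else 0 : R) • (Pi.single a 1 - Pi.single b 1) := by
  ext v
  rw [mulVec_sub, mulVec_single_one, mulVec_single_one]
  rcases eq_or_ne v a with rfl | hva
  · rcases eq_or_ne v b with rfl | hvb
    · simp
    · simp [hvb]
  rcases eq_or_ne v b with rfl | hvb
  · simp [hva, G.adj_comm]
  · simp [hva, hvb, G.adj_comm, htwin v hva hvb]

theorem lapMatrix_mulVec_single_sub_single_of_twins [Ring R]
    (htwin : ∀ v, v ≠ a → v ≠ b → (G.Adj a v ↔ G.Adj b v)) :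
    G.lapMatrix R *ᵥ (Pi.single a 1 - Pi.single b 1)
      = ((G.degree a : R) + if G.Adj a b then 1 else 0) • (Pi.single a 1 - Pi.single b 1) := by
  rw [lapMatrix, sub_mulVec, G.adjMatrix_mulVec_single_sub_single_of_twins htwin, degMatrix,
    mulVec_sub, diagonal_mulVec_single, diagonal_mulVec_single, G.degree_eq_of_twins htwin]
  ext v
  simp only [mul_one, Pi.sub_apply, Pi.smul_apply, smul_eq_mul, Pi.single_apply]
  split_ifs <;> noncomm_ring

end SimpleGraph

theorem pair_lpst_from_periodicity_twin_perturbation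
    {n : ℕ} (G : SimpleGraph (Fin n)) [DecidableRel G.Adj]
    (a b q : Fin n) (hab : a ≠ b) (hqa : q ≠ a) (hqb : q ≠ b)
    (htwin : ∀ v : Fin n, v ≠ a → v ≠ b → (G.Adj a v ↔ G.Adj b v))
    (α τ : ℝ) (hατ : ∃ k : ℤ, 2 * α * τ = (2 * k + 1) * Real.pi)
    (γ : ℂ) (hγ : ‖γ‖ = 1)
    (hper : (NormedSpace.exp ((-(Complex.I * (τ : ℂ))) • G.lapMatrix ℂ)).mulVec
        ((Pi.single a 1 : Fin n → ℂ) - Pi.single q 1)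
      = γ • ((Pi.single a 1 : Fin n → ℂ) - Pi.single q 1)) :
    ∃ γ' : ℂ, ‖γ'‖ = 1 ∧
      (NormedSpace.exp ((-(Complex.I * (τ : ℂ))) •
          (G.lapMatrix ℂ + (α : ℂ) •
            vecMulVec ((Pi.single a 1 : Fin n → ℂ) - Pi.single b 1)
              ((Pi.single a 1 : Fin n → ℂ) - Pi.single b 1)))).mulVec
          ((Pi.single b 1 : Fin n → ℂ) - Pi.single q 1)
        = γ' • ((Pi.single a 1 : Fin n → ℂ) - Pi.single q 1) := by
  set c : ℂ := -(Complex.I * (τ : ℂ))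
  set M := vecMulVec ((Pi.single a 1 : Fin n → ℂ) - Pi.single b 1)
    ((Pi.single a 1 : Fin n → ℂ) - Pi.single b 1)
  have hcomm : Commute (G.lapMatrix ℂ) M :=
    commute_vecMulVec_self (G.isSymm_lapMatrix ℂ)
      (G.lapMatrix_mulVec_single_sub_single_of_twins htwin)
  have hflip : Complex.exp (c * α * 2) = -1 := by
    obtain ⟨k, hk⟩ := hατ
    have hk' : -(2 * α * τ) = (2 * (-k - 1 : ℤ) + 1) * Real.pi := by push_cast; linarith
    rw [← Complex.exp_mul_I_eq_neg_one_of_eq_odd_mul_pi hk']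
    congr 1
    push_cast
    ring
  refine ⟨γ, hγ, ?_⟩
  rw [smul_add, smul_smul, Matrix.exp_add_of_commute _ _ ((hcomm.smul_left c).smul_right _),
    ← mulVec_mulVec, exp_smul_vecMulVec_mulVec_single_sub_single hab hqa hqb hflip, hper]
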